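/- Let k > 3 and let G ≤ Aut(X_k^*) be a self-similar group that contains the automorphisms a_{ij} and a_{jl} for some pairwise distinct i, j, l ∈ X_k. Then G is not contracting. -/

import Mathlib

/-!
Common framework: automorphisms of the rooted tree `X_k^*`, root permutations,
sections, self-similar and contracting groups, Hanoi automorphisms and Hanoi
groups, following Makisumi–Stadnyk–Steinhurst, "Modified Hanoi Towers Groups
and Limit Spaces".

A word `x_n … x_1` over the alphabet `X_k = Fin k` is encoded as the list
`[x_n, …, x_1]`, whose head `x_n` is the first letter, i.e. the letter that a
tree automorphism reads (and permutes) first.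
-/

namespace Hanoi

/-- Words over the alphabet `X_k = Fin k`. -/
abbrev Word (k : ℕ) := List (Fin k)

/-- `e` is an automorphism of the rooted tree `X_k^*`: it fixes the root
(the empty word), preserves word length (levels) and preserves the tree
structure (words sharing an initial segment of length `n` are sent to words
sharing an initial segment of length `n`). -/
def IsTreeAut {k : ℕ} (e : Equiv.Perm (Word k)) : Prop :=
  (∀ w : Word k, (e w).length = w.length) ∧
    ∀ (w v : Word k) (n : ℕ), w.take n = v.take n → (e w).take n = (e v).take n

open Classical in
/-- The root permutation `σ_e` of a tree automorphism `e` (its action on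
one-letter words). -/
noncomputable def rootPerm {k : ℕ} (e : Equiv.Perm (Word k)) : Equiv.Perm (Fin k) :=
  if h : Function.Bijective (fun x : Fin k => ((e [x]).head?.getD x)) then
    Equiv.ofBijective _ h
  else 1

open Classical in
/-- The section `e|_x` of `e` at a letter `x`: the unique automorphism with
`e (x :: w) = σ_e x :: (e|_x) w` for all words `w`. -/
noncomputable def sec {k : ℕ} (e : Equiv.Perm (Word k)) (x : Fin k) : Equiv.Perm (Word k) :=
  if h : Function.Bijective (fun w : Word k => (e (x :: w)).tail) then
    Equiv.ofBijective _ h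
  else 1

/-- The section `e|_v` of `e` at a word `v = x_n … x_1`, defined by
`e|_v = (e|_{x_n})|_{x_{n-1} … x_1}`. -/
noncomputable def secW {k : ℕ} (e : Equiv.Perm (Word k)) : Word k → Equiv.Perm (Word k)
  | [] => e
  | x :: v => secW (sec e x) v

/-- A subgroup of the permutations of `X_k^*` is self-similar if it consists of
tree automorphisms and is closed under taking sections. -/
def IsSelfSimilar {k : ℕ} (G : Subgroup (Equiv.Perm (Word k))) : Prop :=
  (∀ g ∈ G, IsTreeAut g) ∧ ∀ g ∈ G, ∀ x : Fin k, sec g x ∈ G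

/-- A self-similar group `G` is contracting if there is a finite subset `N ⊆ G`
such that for every `g ∈ G` all sections of `g` at words of length at least
some `m` lie in `N`. -/
def IsContracting {k : ℕ} (G : Subgroup (Equiv.Perm (Word k))) : Prop :=
  ∃ N : Set (Equiv.Perm (Word k)), N.Finite ∧ N ⊆ (G : Set (Equiv.Perm (Word k))) ∧
    ∀ g ∈ G, ∃ m : ℕ, ∀ v : Word k, m ≤ v.length → secW g v ∈ N

/-- `N` is the nucleus of `G`: a smallest finite subset of `G` catching all
deep enough sections of every element of `G`. -/
def IsNucleus {k : ℕ} (G : Subgroup (Equiv.Perm (Word k)))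
    (N : Set (Equiv.Perm (Word k))) : Prop :=
  (N.Finite ∧ N ⊆ (G : Set (Equiv.Perm (Word k))) ∧
    ∀ g ∈ G, ∃ m : ℕ, ∀ v : Word k, m ≤ v.length → secW g v ∈ N) ∧
  ∀ N' : Set (Equiv.Perm (Word k)), N'.Finite → N' ⊆ (G : Set (Equiv.Perm (Word k))) →
    (∀ g ∈ G, ∃ m : ℕ, ∀ v : Word k, m ≤ v.length → secW g v ∈ N') → N ⊆ N'

/-- `a` is a Hanoi automorphism with set of inactive pegs `Q`: the section at
each active peg (element of the complement of `Q`) is trivial, the section at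
each inactive peg is `a` itself, and the root permutation fixes each inactive
peg. -/
def IsHanoiWith {k : ℕ} (a : Equiv.Perm (Word k)) (Q : Set (Fin k)) : Prop :=
  IsTreeAut a ∧ (∀ i ∉ Q, sec a i = 1) ∧ (∀ j ∈ Q, sec a j = a) ∧
    ∀ j ∈ Q, rootPerm a j = j

/-- `a` is a `k`-peg Hanoi automorphism. -/
def IsHanoiAut {k : ℕ} (a : Equiv.Perm (Word k)) : Prop := ∃ Q, IsHanoiWith a Q

open Classical in
/-- The set `Q_a` of inactive pegs of a Hanoi automorphism `a`; by convention
`Q_1 = X_k` (for `a ≠ 1` the set of inactive pegs is uniquely determined). -/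
noncomputable def inactivePegs {k : ℕ} (a : Equiv.Perm (Word k)) : Set (Fin k) :=
  if a = 1 then Set.univ
  else if h : ∃ Q, IsHanoiWith a Q then h.choose else ∅

/-- `S_{k,q}`: the set of Hanoi automorphisms over `X_k` with exactly `q`
inactive pegs. -/
noncomputable def hanoiSet (k q : ℕ) : Set (Equiv.Perm (Word k)) :=
  {a | IsHanoiAut a ∧ (inactivePegs a).ncard = q}

/-- `L = [s_n, …, s_1]` is a representation of `g` over the generating set `S`:
each `s_i ∈ S ∪ S⁻¹` and `g = s_n ⋯ s_2 s_1`. -/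
def IsRepOf {k : ℕ} (S : Set (Equiv.Perm (Word k))) (L : List (Equiv.Perm (Word k)))
    (g : Equiv.Perm (Word k)) : Prop :=
  (∀ s ∈ L, s ∈ S ∨ s⁻¹ ∈ S) ∧ L.prod = g

/-- The length `l(g)` of `g` with respect to `S`: the length of a minimal
representation (`0` for the identity). -/
noncomputable def repLength {k : ℕ} (S : Set (Equiv.Perm (Word k)))
    (g : Equiv.Perm (Word k)) : ℕ :=
  sInf {n | ∃ L, IsRepOf S L g ∧ L.length = n}

/-- The essential set of a representation: the intersection of the sets of
inactive pegs of its letters. -/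
noncomputable def essSet {k : ℕ} (L : List (Equiv.Perm (Word k))) : Set (Fin k) :=
  ⋂ s ∈ L, inactivePegs s

/-- The prenucleus of `G`: the set of elements `g ∈ G` with `g|_j = g` for some
letter `j`. -/
noncomputable def preNucleus {k : ℕ} (G : Subgroup (Equiv.Perm (Word k))) :
    Set (Equiv.Perm (Word k)) :=
  {g | g ∈ G ∧ ∃ j : Fin k, sec g j = g}

/-- The underlying function of the Hanoi Towers move `a_{ij}`: it changes the
first occurrence of `i` or `j` in a word by means of the transposition `(i j)`
and leaves the rest of the word unchanged. -/
def hanoiMoveFun {k : ℕ} (i j : Fin k) : Word k → Word k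
  | [] => []
  | x :: w => if x = i ∨ x = j then Equiv.swap i j x :: w else x :: hanoiMoveFun i j w

theorem hanoiMoveFun_involutive {k : ℕ} (i j : Fin k) :
    Function.Involutive (hanoiMoveFun i j) := by
  intro w
  induction w with
  | nil => rfl
  | cons x t ih =>
    by_cases h : x = i ∨ x = j
    · have h2 : Equiv.swap i j x = i ∨ Equiv.swap i j x = j := by
        rcases h with h | h <;> subst h <;> simp
      simp only [hanoiMoveFun, if_pos h, if_pos h2, Equiv.swap_apply_self]
    · simp only [hanoiMoveFun, if_neg h, ih]

/-- The Hanoi Towers move `a_{ij}`, as a permutation of `X_k^*`: its root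
permutation is the transposition `(i j)`, its sections at `i` and `j` are
trivial and all its other sections equal `a_{ij}` itself. -/
def hanoiMove {k : ℕ} (i j : Fin k) : Equiv.Perm (Word k) :=
  (hanoiMoveFun_involutive i j).toPerm

/-- The orbit of the letter `j` under the subgroup of `Sym(X_k)` generated by
the root permutations of the elements of `T`. -/
noncomputable def orbT {k : ℕ} (T : Finset (Equiv.Perm (Word k))) (j : Fin k) : Set (Fin k) :=
  MulAction.orbit (Subgroup.closure ((fun a => rootPerm a) '' (T : Set (Equiv.Perm (Word k))))) j

/-- The set `Fix(T)` of letters fixed by the root permutation of every element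
of `T`. -/
noncomputable def fixT {k : ℕ} (T : Finset (Equiv.Perm (Word k))) : Set (Fin k) :=
  {x | ∀ s ∈ T, rootPerm s x = x}

/-- Condition (*) on a generating set `S` of Hanoi automorphisms: for every
finite `T ⊆ S` with nonempty essential set and every letter `j ∉ Fix(T)`,
the orbit of `j` misses the inactive pegs of some element of `T`. -/
noncomputable def CondStar {k : ℕ} (S : Set (Equiv.Perm (Word k))) : Prop :=
  ∀ T : Finset (Equiv.Perm (Word k)), (T : Set (Equiv.Perm (Word k))) ⊆ S →
    (⋂ s ∈ T, inactivePegs s).Nonempty →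
    ∀ j : Fin k, j ∉ fixT T →
      ∃ s ∈ T, orbT T j ∩ inactivePegs s = ∅

open Classical in
/-- `d(g)`: the least number of distinct generators occurring among all
representations of `g` having nonempty essential set. -/
noncomputable def dCount {k : ℕ} (S : Set (Equiv.Perm (Word k)))
    (g : Equiv.Perm (Word k)) : ℕ :=
  sInf {M | ∃ L, IsRepOf S L g ∧ (essSet L).Nonempty ∧ L.toFinset.card = M}

/-- `S` is fully symmetric: for every non-identity `a ∈ S` and every
`φ ∈ Sym(X_k)`, the Hanoi automorphism `φ·a` with inactive pegs `φ(Q_a)` and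
root permutation `φ ∘ σ_a ∘ φ⁻¹` again lies in `S`. -/
noncomputable def FullySymmetric {k : ℕ} (S : Set (Equiv.Perm (Word k))) : Prop :=
  ∀ a ∈ S, a ≠ 1 → ∀ φ : Equiv.Perm (Fin k), ∀ b : Equiv.Perm (Word k),
    IsHanoiWith b (φ '' inactivePegs a) →
    rootPerm b = φ * rootPerm a * φ⁻¹ → b ∈ S

/-- The family `R̲_{k,n}`: the identity together with all Hanoi automorphisms
`a` such that (1) `Q_a ⊆ {m+1, …, m+n}` for some `m`, and (2) whenever
`i ∈ Q_a` the root permutation of `a` fixes `i-1, …, i-(n-1)`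
(all peg labels mod `k`). -/
noncomputable def Runder (k n : ℕ) : Set (Equiv.Perm (Word k)) :=
  {a | a = 1 ∨ (IsHanoiAut a ∧
    (∃ m : Fin k, ∀ q ∈ inactivePegs a, ∃ t : ℕ, 1 ≤ t ∧ t ≤ n ∧
      (q : ℕ) = ((m : ℕ) + t) % k) ∧
    ∀ i ∈ inactivePegs a, ∀ x : Fin k, ∀ t : ℕ, 1 ≤ t → t ≤ n - 1 →
      ((x : ℕ) + t) % k = (i : ℕ) → rootPerm a x = x)}

/-- The family `R̄_{k,n}`: the identity together with all Hanoi automorphisms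
`a` such that (1) `Q_a ⊆ {m+1, …, m+n}` for some `m`, and (2) whenever
`i ∈ Q_a` the root permutation of `a` fixes `i+1, …, i+(n-1)`
(all peg labels mod `k`). -/
noncomputable def Rover (k n : ℕ) : Set (Equiv.Perm (Word k)) :=
  {a | a = 1 ∨ (IsHanoiAut a ∧
    (∃ m : Fin k, ∀ q ∈ inactivePegs a, ∃ t : ℕ, 1 ≤ t ∧ t ≤ n ∧
      (q : ℕ) = ((m : ℕ) + t) % k) ∧
    ∀ i ∈ inactivePegs a, ∀ x : Fin k, ∀ t : ℕ, 1 ≤ t → t ≤ n - 1 →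
      (x : ℕ) = ((i : ℕ) + t) % k → rootPerm a x = x)}

/-- The finite word `x_m … x_1` (first letter `x_m`) read off from a
left-infinite sequence `… x_2 x_1`, encoded as `x : ℕ → Fin k` with
`x s = x_{s+1}`. -/
def wordOf {k : ℕ} (x : ℕ → Fin k) (m : ℕ) : Word k := (List.range m).reverse.map x

/-!
Put `c = a_{ij} a_{jl}`. Its root permutation is the 3-cycle `(i j l)`, and its sections are
`c|_i = a_{jl}`, `c|_j = a_{ij}`, `c|_l = 1` and `c|_x = c` for every other letter `x`. Since
`k > 3` such an `x` exists; it is fixed by `σ_c`, so `c^n|_{x…x} = c^n` for every power, and in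
a contracting group all these powers would lie in the finite nucleus. But `c` has infinite order:
if `c^n = 1` then `3 ∣ n`, and `c^{3m}|_i = (c^3|_i)^m = c^m` gives the shorter relation
`c^m = 1`.
-/

variable {k : ℕ}

namespace IsTreeAut

lemma one : IsTreeAut (1 : Equiv.Perm (Word k)) :=
  ⟨fun _ => rfl, fun _ _ _ h => h⟩

lemma mul {f g : Equiv.Perm (Word k)} (hf : IsTreeAut f) (hg : IsTreeAut g) :
    IsTreeAut (f * g) :=
  ⟨fun w => (hf.1 _).trans (hg.1 w), fun _ _ _ h => hf.2 _ _ _ (hg.2 _ _ _ h)⟩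

lemma pow {f : Equiv.Perm (Word k)} (hf : IsTreeAut f) (n : ℕ) : IsTreeAut (f ^ n) := by
  induction n with
  | zero => exact one
  | succ n ih => rw [pow_succ]; exact ih.mul hf

variable {e : Equiv.Perm (Word k)} (he : IsTreeAut e)
include he

lemma length_symm_apply (w : Word k) : (e.symm w).length = w.length := by
  rw [← he.1, e.apply_symm_apply]

lemma exists_apply_singleton (x : Fin k) : ∃ y, e [x] = [y] :=
  List.length_eq_one_iff.mp (he.1 [x])

lemma bijective_head_apply_singleton :
    Function.Bijective (fun x : Fin k => (e [x]).head?.getD x) := by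
  refine Finite.surjective_iff_bijective.mp fun y => ?_
  obtain ⟨x, hx⟩ := List.length_eq_one_iff.mp (he.length_symm_apply [y])
  refine ⟨x, ?_⟩
  simp [← hx]

lemma apply_singleton (x : Fin k) : e [x] = [rootPerm e x] := by
  obtain ⟨y, hy⟩ := he.exists_apply_singleton x
  rw [rootPerm, dif_pos he.bijective_head_apply_singleton]
  simp [hy]

lemma apply_cons_eq_cons_tail (x : Fin k) (w : Word k) :
    e (x :: w) = rootPerm e x :: (e (x :: w)).tail := by
  obtain ⟨y, t, hyt⟩ := List.exists_cons_of_length_eq_add_one (he.1 (x :: w))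
  have h1 : (e (x :: w)).take 1 = (e [x]).take 1 := he.2 _ _ 1 rfl
  rw [he.apply_singleton, hyt] at h1
  simp only [List.take_succ_cons, List.take_zero, List.cons.injEq, and_true] at h1
  rw [hyt, h1, List.tail_cons]

lemma bijective_tail_apply_cons (x : Fin k) :
    Function.Bijective (fun w : Word k => (e (x :: w)).tail) := by
  refine ⟨fun w v hwv => ?_, fun u => ?_⟩
  · have : e (x :: w) = e (x :: v) := by
      rw [he.apply_cons_eq_cons_tail x w, he.apply_cons_eq_cons_tail x v]
      exact congrArg _ hwv
    simpa using e.injective this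
  · obtain ⟨y, t, hyt⟩ :=
      List.exists_cons_of_length_eq_add_one (he.length_symm_apply (rootPerm e x :: u))
    have hu : e (y :: t) = rootPerm e x :: u := by rw [← hyt, e.apply_symm_apply]
    have hy : rootPerm e y :: (e (y :: t)).tail = rootPerm e x :: u :=
      (he.apply_cons_eq_cons_tail y t).symm.trans hu
    obtain rfl : y = x := (rootPerm e).injective (List.cons.inj hy).1
    exact ⟨t, (List.cons.inj hy).2⟩

lemma sec_apply (x : Fin k) (w : Word k) : sec e x w = (e (x :: w)).tail := by
  rw [sec, dif_pos (he.bijective_tail_apply_cons x)]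
  rfl

lemma apply_cons (x : Fin k) (w : Word k) : e (x :: w) = rootPerm e x :: sec e x w := by
  rw [he.sec_apply]
  exact he.apply_cons_eq_cons_tail x w

end IsTreeAut

lemma rootPerm_one : rootPerm (1 : Equiv.Perm (Word k)) = 1 :=
  Equiv.ext fun x => by simpa using (IsTreeAut.one.apply_singleton x).symm

lemma sec_one (x : Fin k) : sec (1 : Equiv.Perm (Word k)) x = 1 :=
  Equiv.ext fun w => IsTreeAut.one.sec_apply x w

namespace IsTreeAut

variable {f g : Equiv.Perm (Word k)} (hf : IsTreeAut f)
include hf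

lemma rootPerm_mul (hg : IsTreeAut g) : rootPerm (f * g) = rootPerm f * rootPerm g :=
  Equiv.ext fun x => by
    simpa [hg.apply_singleton, hf.apply_singleton] using ((hf.mul hg).apply_singleton x).symm

lemma sec_mul (hg : IsTreeAut g) (x : Fin k) :
    sec (f * g) x = sec f (rootPerm g x) * sec g x :=
  Equiv.ext fun w => by
    simp [(hf.mul hg).sec_apply, hg.apply_cons, hf.apply_cons]

lemma rootPerm_pow (n : ℕ) : rootPerm (f ^ n) = rootPerm f ^ n := by
  induction n with
  | zero => exact rootPerm_one
  | succ n ih => rw [pow_succ, pow_succ, (hf.pow n).rootPerm_mul hf, ih]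

lemma sec_pow_of_rootPerm_eq {x : Fin k} (hx : rootPerm f x = x) (n : ℕ) :
    sec (f ^ n) x = sec f x ^ n := by
  induction n with
  | zero => exact sec_one x
  | succ n ih => rw [pow_succ, pow_succ, (hf.pow n).sec_mul hf, hx, ih]

end IsTreeAut

lemma secW_replicate_of_sec_eq {g : Equiv.Perm (Word k)} {x : Fin k} (h : sec g x = g) (m : ℕ) :
    secW g (List.replicate m x) = g := by
  induction m with
  | zero => rfl
  | succ m ih => rw [List.replicate_succ, secW, h, ih]

lemma IsContracting.finite_preNucleus {G : Subgroup (Equiv.Perm (Word k))} (hG : IsContracting G) :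
    (preNucleus G).Finite := by
  obtain ⟨N, hN, -, hsec⟩ := hG
  refine hN.subset fun g ⟨hgG, x, hx⟩ => ?_
  obtain ⟨m, hm⟩ := hsec g hgG
  simpa [secW_replicate_of_sec_eq hx] using hm (List.replicate m x) (by simp)

lemma IsTreeAut.not_isContracting_of_not_isOfFinOrder {G : Subgroup (Equiv.Perm (Word k))}
    {g : Equiv.Perm (Word k)} (hg : IsTreeAut g) (hgG : g ∈ G) {x : Fin k}
    (hx : rootPerm g x = x) (hsec : sec g x = g) (hinf : ¬IsOfFinOrder g) :
    ¬IsContracting G := by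
  refine fun hG => hinf (finite_powers.mp (hG.finite_preNucleus.subset ?_))
  rintro - ⟨n, rfl⟩
  exact ⟨pow_mem hgG n, x, by rw [hg.sec_pow_of_rootPerm_eq hx, hsec]⟩

section HanoiMove

variable (i j : Fin k)

lemma hanoiMove_apply (w : Word k) : hanoiMove i j w = hanoiMoveFun i j w := rfl

lemma hanoiMoveFun_length (w : Word k) : (hanoiMoveFun i j w).length = w.length := by
  induction w with
  | nil => rfl
  | cons x t ih => by_cases h : x = i ∨ x = j <;> simp [hanoiMoveFun, h, ih]

lemma hanoiMoveFun_take (w : Word k) (n : ℕ) :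
    (hanoiMoveFun i j w).take n = hanoiMoveFun i j (w.take n) := by
  induction w generalizing n with
  | nil => simp [hanoiMoveFun]
  | cons x t ih => cases n <;> by_cases h : x = i ∨ x = j <;> simp [hanoiMoveFun, h, ih]

lemma isTreeAut_hanoiMove : IsTreeAut (hanoiMove i j) :=
  ⟨hanoiMoveFun_length i j, fun w v n h => by
    rw [hanoiMove_apply, hanoiMove_apply, hanoiMoveFun_take, hanoiMoveFun_take, h]⟩

lemma rootPerm_hanoiMove : rootPerm (hanoiMove i j) = Equiv.swap i j := by
  refine Equiv.ext fun x => ?_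
  have hx := (isTreeAut_hanoiMove i j).apply_singleton x
  rw [hanoiMove_apply, hanoiMoveFun] at hx
  by_cases h : x = i ∨ x = j
  · simpa [h] using hx.symm
  · rw [not_or] at h
    simpa [h, Equiv.swap_apply_of_ne_of_ne h.1 h.2, hanoiMoveFun] using hx.symm

variable {i j}

lemma sec_hanoiMove_of_active {x : Fin k} (h : x = i ∨ x = j) : sec (hanoiMove i j) x = 1 :=
  Equiv.ext fun w => by
    rw [(isTreeAut_hanoiMove i j).sec_apply, hanoiMove_apply, hanoiMoveFun, if_pos h]
    rfl

lemma sec_hanoiMove_of_ne {x : Fin k} (hi : x ≠ i) (hj : x ≠ j) :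
    sec (hanoiMove i j) x = hanoiMove i j :=
  Equiv.ext fun w => by
    rw [(isTreeAut_hanoiMove i j).sec_apply, hanoiMove_apply, hanoiMoveFun, if_neg (by tauto)]
    rfl

end HanoiMove

section HanoiMoveMul

variable {i j l : Fin k}

lemma isTreeAut_hanoiMove_mul : IsTreeAut (hanoiMove i j * hanoiMove j l) :=
  (isTreeAut_hanoiMove i j).mul (isTreeAut_hanoiMove j l)

lemma rootPerm_hanoiMove_mul :
    rootPerm (hanoiMove i j * hanoiMove j l) = Equiv.swap i j * Equiv.swap j l := by
  rw [(isTreeAut_hanoiMove i j).rootPerm_mul (isTreeAut_hanoiMove j l), rootPerm_hanoiMove,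
    rootPerm_hanoiMove]

lemma sec_hanoiMove_mul (x : Fin k) :
    sec (hanoiMove i j * hanoiMove j l) x =
      sec (hanoiMove i j) (Equiv.swap j l x) * sec (hanoiMove j l) x := by
  rw [(isTreeAut_hanoiMove i j).sec_mul (isTreeAut_hanoiMove j l), rootPerm_hanoiMove]

variable (hij : i ≠ j) (hjl : j ≠ l) (hil : i ≠ l)
include hij hjl hil

lemma isThreeCycle_rootPerm_hanoiMove_mul :
    (rootPerm (hanoiMove i j * hanoiMove j l)).IsThreeCycle := by
  rw [rootPerm_hanoiMove_mul, Equiv.swap_comm]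
  exact Equiv.Perm.isThreeCycle_swap_mul_swap_same hij.symm hjl hil

lemma sec_hanoiMove_mul_pow_three :
    sec ((hanoiMove i j * hanoiMove j l) ^ 3) i = hanoiMove i j * hanoiMove j l := by
  have hc := isTreeAut_hanoiMove_mul (i := i) (j := j) (l := l)
  have hσi : rootPerm (hanoiMove i j * hanoiMove j l) i = j := by
    rw [rootPerm_hanoiMove_mul, Equiv.Perm.mul_apply, Equiv.swap_apply_of_ne_of_ne hij hil,
      Equiv.swap_apply_left]
  have hσj : rootPerm (hanoiMove i j * hanoiMove j l) j = l := by
    rw [rootPerm_hanoiMove_mul, Equiv.Perm.mul_apply, Equiv.swap_apply_left,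
      Equiv.swap_apply_of_ne_of_ne hil.symm hjl.symm]
  have hci : sec (hanoiMove i j * hanoiMove j l) i = hanoiMove j l := by
    rw [sec_hanoiMove_mul, Equiv.swap_apply_of_ne_of_ne hij hil, sec_hanoiMove_of_active (.inl rfl),
      sec_hanoiMove_of_ne hij hil, one_mul]
  have hcj : sec (hanoiMove i j * hanoiMove j l) j = hanoiMove i j := by
    rw [sec_hanoiMove_mul, Equiv.swap_apply_left, sec_hanoiMove_of_ne hil.symm hjl.symm,
      sec_hanoiMove_of_active (.inl rfl), mul_one]
  have hcl : sec (hanoiMove i j * hanoiMove j l) l = 1 := by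
    rw [sec_hanoiMove_mul, Equiv.swap_apply_right, sec_hanoiMove_of_active (.inr rfl),
      sec_hanoiMove_of_active (.inr rfl), mul_one]
  rw [pow_three, hc.sec_mul (hc.mul hc), hc.rootPerm_mul hc, Equiv.Perm.mul_apply, hc.sec_mul hc,
    hσi, hσj, hcl, hcj, hci, one_mul]

lemma not_isOfFinOrder_hanoiMove_mul : ¬IsOfFinOrder (hanoiMove i j * hanoiMove j l) := by
  intro hfin
  have hc := isTreeAut_hanoiMove_mul (i := i) (j := j) (l := l)
  have hσ := (isThreeCycle_rootPerm_hanoiMove_mul hij hjl hil).orderOf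
  obtain ⟨m, hm⟩ : 3 ∣ orderOf (hanoiMove i j * hanoiMove j l) := by
    refine hσ ▸ orderOf_dvd_of_pow_eq_one ?_
    rw [← hc.rootPerm_pow, pow_orderOf_eq_one, rootPerm_one]
  have hcube : rootPerm ((hanoiMove i j * hanoiMove j l) ^ 3) i = i := by
    rw [hc.rootPerm_pow, ← hσ, pow_orderOf_eq_one, Equiv.Perm.one_apply]
  have hcm : (hanoiMove i j * hanoiMove j l) ^ m = 1 := by
    rw [← sec_hanoiMove_mul_pow_three hij hjl hil, ← (hc.pow 3).sec_pow_of_rootPerm_eq hcube,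
      ← pow_mul, ← hm, pow_orderOf_eq_one, sec_one]
  have hpos := hfin.orderOf_pos
  exact pow_ne_one_of_lt_orderOf (by omega) (by omega) hcm

end HanoiMoveMul

lemma exists_ne_ne_ne_of_three_lt_card {α : Type*} [Fintype α] (h : 3 < Fintype.card α)
    (a b c : α) : ∃ x, x ≠ a ∧ x ≠ b ∧ x ≠ c := by
  classical
  obtain ⟨x, -, hx⟩ := Finset.exists_mem_notMem_of_card_lt_card
    (s := {a, b, c}) (t := Finset.univ) ((Finset.card_le_three).trans_lt h)
  simp only [Finset.mem_insert, Finset.mem_singleton, not_or] at hx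
  exact ⟨x, hx⟩

theorem hanoiTowers_noncontracting_general {k : ℕ} (hk : 3 < k)
    (G : Subgroup (Equiv.Perm (Word k)))
    (i j l : Fin k) (hij : i ≠ j) (hjl : j ≠ l) (hil : i ≠ l)
    (haij : hanoiMove i j ∈ G) (hajl : hanoiMove j l ∈ G) :
    ¬ IsContracting G := by
  obtain ⟨x, hxi, hxj, hxl⟩ := exists_ne_ne_ne_of_three_lt_card (by simpa using hk) i j l
  refine isTreeAut_hanoiMove_mul.not_isContracting_of_not_isOfFinOrder (mul_mem haij hajl)
    (x := x) ?_ ?_ (not_isOfFinOrder_hanoiMove_mul hij hjl hil)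
  · rw [rootPerm_hanoiMove_mul, Equiv.Perm.mul_apply, Equiv.swap_apply_of_ne_of_ne hxj hxl,
      Equiv.swap_apply_of_ne_of_ne hxi hxj]
  · rw [sec_hanoiMove_mul, Equiv.swap_apply_of_ne_of_ne hxj hxl, sec_hanoiMove_of_ne hxi hxj,
      sec_hanoiMove_of_ne hxj hxl]

/-- Proposition: `H^{(k)}` for `k > 3` is not contracting.
Any self-similar group over `X_k`, `k > 3`, containing the Hanoi Towers moves
`a_{ij}` and `a_{jl}` for pairwise distinct `i, j, l` is not contracting. -/
theorem hanoiTowers_noncontracting {k : ℕ} (hk : 3 < k)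
    (G : Subgroup (Equiv.Perm (Word k))) (hG : IsSelfSimilar G)
    (i j l : Fin k) (hij : i ≠ j) (hjl : j ≠ l) (hil : i ≠ l)
    (haij : hanoiMove i j ∈ G) (hajl : hanoiMove j l ∈ G) :
    ¬ IsContracting G :=
  hanoiTowers_noncontracting_general hk G i j l hij hjl hil haij hajl

end Hanoi
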